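/- arXiv:2605.06704 — 2 statements merged into one kernel-verified Lean document; each statement's English description precedes it below -/
import Mathlib

section
/- Let α be a real constant with α(α−3)(2α−3) ≠ 0, set m := (2α³−9α²+9α)^{1/3} (real cube root) and s := (3α²−9α+9)/m². Then there exist no nonempty open set V ⊆ ℝ² and point transformation (x̄,ū) = (φ(x,u), ψ(x,u)) on V under which the ODE u‴ = α·(u″)²/u′ is equivalent to the canonical form ū‴ = s·ū′ + ū; that is, for every such V and point transformation there is a smooth solution u(x) of u‴ = α(u″)²/u′ with u′ ≠ 0, graph in V, and (d/dx)φ(x,u(x)) ≠ 0, whose transform fails to solve ū‴ = s·ū′ + ū. -/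
/-!
Invariants of the third-order ODE `u''' = f(x, u, u', u'')` under contact
transformations, following Cartan's equivalence method.
We write `p = u'`, `q = u''`.
-/

noncomputable section

/-- The real cube root of a real number. -/
def cbrt (y : ℝ) : ℝ := if 0 ≤ y then y ^ ((1 : ℝ)/3) else -((-y) ^ ((1 : ℝ)/3))

/-- Functions of `(x, u, p, q)`. -/
abbrev Fn : Type := ℝ → ℝ → ℝ → ℝ → ℝ

/-- Functions of `(x, u, p)`. -/
abbrev Fn3 : Type := ℝ → ℝ → ℝ → ℝ

/-- Partial derivative in `x` of a function of `(x,u,p,q)`. -/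
def pdx (g : Fn) : Fn := fun x u p q => deriv (fun t => g t u p q) x
/-- Partial derivative in `u` of a function of `(x,u,p,q)`. -/
def pdu (g : Fn) : Fn := fun x u p q => deriv (fun t => g x t p q) u
/-- Partial derivative in `p` of a function of `(x,u,p,q)`. -/
def pdp (g : Fn) : Fn := fun x u p q => deriv (fun t => g x u t q) p
/-- Partial derivative in `q` of a function of `(x,u,p,q)`. -/
def pdq (g : Fn) : Fn := fun x u p q => deriv (fun t => g x u p t) q

/-- Partial derivative in `x` of a function of `(x,u,p)`. -/
def pdx3 (g : Fn3) : Fn3 := fun x u p => deriv (fun t => g t u p) x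
/-- Partial derivative in `u` of a function of `(x,u,p)`. -/
def pdu3 (g : Fn3) : Fn3 := fun x u p => deriv (fun t => g x t p) u
/-- Partial derivative in `p` of a function of `(x,u,p)`. -/
def pdp3 (g : Fn3) : Fn3 := fun x u p => deriv (fun t => g x u t) p

/-- Lift of a function of `(x,u,p)` to a function of `(x,u,p,q)`, constant in `q`. -/
def lift (g : Fn3) : Fn := fun x u p _ => g x u p

/-- The total derivative operator `D̂ₓ = ∂ₓ + p ∂ᵤ + q ∂ₚ + f ∂_q` of the ODE `u''' = f`. -/
def Dhat (f g : Fn) : Fn := fun x u p q =>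
  pdx g x u p q + p * pdu g x u p q + q * pdp g x u p q + f x u p q * pdq g x u p q

/-- `I₁ = −f_q`. -/
def I1 (f : Fn) : Fn := fun x u p q => -(pdq f x u p q)

/-- `I₂ = −(2/9)I₁² − f_p − (1/3)D̂ₓI₁`. -/
def I2 (f : Fn) : Fn := fun x u p q =>
  -(2/9) * (I1 f x u p q)^2 - pdp f x u p q - (1/3) * Dhat f (I1 f) x u p q

/-- `I₃ = −(1/3)I₁I₂ − f_u − (1/2)D̂ₓI₂`. -/
def I3 (f : Fn) : Fn := fun x u p q =>
  -(1/3) * I1 f x u p q * I2 f x u p q - pdu f x u p q - (1/2) * Dhat f (I2 f) x u p q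

/-- `J₃`, the real cube root of `I₃`. -/
def J3 (f : Fn) : Fn := fun x u p q => cbrt (I3 f x u p q)

/-- `I₄ = (J₃)_q`. -/
def I4 (f : Fn) : Fn := pdq (J3 f)

/-- `I₅ = (1/(3J₃²))(I₁J₃ + 3D̂ₓJ₃)`. -/
def I5 (f : Fn) : Fn := fun x u p q =>
  (1 / (3 * (J3 f x u p q)^2)) * (I1 f x u p q * J3 f x u p q + 3 * Dhat f (J3 f) x u p q)

/-- `I₇ = −(I₅)_q J₃²`. -/
def I7 (f : Fn) : Fn := fun x u p q => -(pdq (I5 f) x u p q) * (J3 f x u p q)^2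

/-- `I₉ = 2J₃D̂ₓI₅ − I₂ + J₃²I₅²`. -/
def I9 (f : Fn) : Fn := fun x u p q =>
  2 * J3 f x u p q * Dhat f (I5 f) x u p q - I2 f x u p q
    + (J3 f x u p q)^2 * (I5 f x u p q)^2

/-- `K = I₉/J₃²`. -/
def Kinv (f : Fn) : Fn := fun x u p q => I9 f x u p q / (J3 f x u p q)^2

/-- `Q = −(I₁I₇ + 3J₃²(I₅)_p + 3(J₃)_u − 3J₃I₄D̂ₓI₅)/(3J₃)`. -/
def Qinv (f : Fn) : Fn := fun x u p q =>
  -(I1 f x u p q * I7 f x u p q + 3 * (J3 f x u p q)^2 * pdp (I5 f) x u p q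
      + 3 * pdu (J3 f) x u p q
      - 3 * J3 f x u p q * I4 f x u p q * Dhat f (I5 f) x u p q)
    / (3 * J3 f x u p q)

/-- `I₆ = (2/3)(J₃)_q I₁ − (1/3)(I₁)_q J₃ − 2(J₃)_p + 2J₃I₄I₅`. -/
def I6 (f : Fn) : Fn := fun x u p q =>
  (2/3) * pdq (J3 f) x u p q * I1 f x u p q - (1/3) * pdq (I1 f) x u p q * J3 f x u p q
    - 2 * pdp (J3 f) x u p q + 2 * J3 f x u p q * I4 f x u p q * I5 f x u p q

/-- `I₈ = (I₄)_q`. -/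
def I8 (f : Fn) : Fn := pdq (I4 f)

/-- `I₁₀ = I₄D̂ₓI₇ − J₃(I₇)_p + J₃²(I₄/J₃)_u`. -/
def I10 (f : Fn) : Fn := fun x u p q =>
  I4 f x u p q * Dhat f (I7 f) x u p q - J3 f x u p q * pdp (I7 f) x u p q
    + (J3 f x u p q)^2 *
      pdu (fun x' u' p' q' => I4 f x' u' p' q' / J3 f x' u' p' q') x u p q

/-- `I₁₁ = (J₃)_u − D̂ₓI₇`. -/
def I11 (f : Fn) : Fn := fun x u p q =>
  pdu (J3 f) x u p q - Dhat f (I7 f) x u p q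

/-- `I₁₂`. -/
def I12 (f : Fn) : Fn := fun x u p q =>
  6 * I1 f x u p q * J3 f x u p q *
      (I5 f x u p q * I7 f x u p q - I4 f x u p q * Dhat f (I5 f) x u p q)
    - 18 * (J3 f x u p q)^3 * I4 f x u p q
    + 6 * pdp (I5 f) x u p q * I1 f x u p q * (J3 f x u p q)^2
    - 18 * I2 f x u p q * J3 f x u p q * I4 f x u p q * I5 f x u p q
    - 18 * J3 f x u p q * I7 f x u p q * Dhat f (I5 f) x u p q
    + 18 * (J3 f x u p q)^2 * pdu (I5 f) x u p q
    + 18 * I2 f x u p q * Dhat f (I4 f) x u p q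
    + 2 * (I1 f x u p q)^2 * I7 f x u p q
    - 9 * pdp (I2 f) x u p q * J3 f x u p q
    + 6 * (J3 f x u p q)^2 *
        pdu (fun x' u' p' q' => I1 f x' u' p' q' / J3 f x' u' p' q') x u p q
    + 36 * I2 f x u p q * I7 f x u p q

/-- `I₁₃ = (J₃I₄I₅ − I₇)D̂ₓK + J₃K_u − J₃²I₅K_p`. -/
def I13 (f : Fn) : Fn := fun x u p q =>
  (J3 f x u p q * I4 f x u p q * I5 f x u p q - I7 f x u p q) * Dhat f (Kinv f) x u p q
    + J3 f x u p q * pdu (Kinv f) x u p q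
    - (J3 f x u p q)^2 * I5 f x u p q * pdp (Kinv f) x u p q

/-- `I₁₄ = K_q`. -/
def I14 (f : Fn) : Fn := pdq (Kinv f)

/-- `I₁₅ = I₄D̂ₓK − J₃K_p`. -/
def I15 (f : Fn) : Fn := fun x u p q =>
  I4 f x u p q * Dhat f (Kinv f) x u p q - J3 f x u p q * pdp (Kinv f) x u p q

/-- The Jacobian determinant of the map `(x,u,p) ↦ (φ, ψ, χ)`. -/
def jac3 (φ ψ χ : Fn3) : Fn3 := fun x u p =>
  Matrix.det !![pdx3 φ x u p, pdu3 φ x u p, pdp3 φ x u p;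
                pdx3 ψ x u p, pdu3 ψ x u p, pdp3 ψ x u p;
                pdx3 χ x u p, pdu3 χ x u p, pdp3 χ x u p]

/-- A contact transformation `(x̄,ū,p̄) = (φ(x,u,p), ψ(x,u,p), χ(x,u,p))` on an open set
`U ⊆ ℝ³`: a smooth map with nowhere-vanishing Jacobian determinant, together with a
nowhere-vanishing contact multiplier `lam` such that `dψ − χ dφ = lam (du − p dx)`. -/
structure IsContactTransformOn (U : Set (ℝ × ℝ × ℝ)) (φ ψ χ lam : Fn3) : Prop where
  isOpen : IsOpen U
  smooth : ContDiffOn ℝ (⊤ : ℕ∞) (fun v : ℝ × ℝ × ℝ =>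
      (φ v.1 v.2.1 v.2.2, ψ v.1 v.2.1 v.2.2, χ v.1 v.2.1 v.2.2)) U
  jac_ne : ∀ x u p, (x, u, p) ∈ U → jac3 φ ψ χ x u p ≠ 0
  lam_ne : ∀ x u p, (x, u, p) ∈ U → lam x u p ≠ 0
  contact_p : ∀ x u p, (x, u, p) ∈ U → pdp3 ψ x u p - χ x u p * pdp3 φ x u p = 0
  contact_u : ∀ x u p, (x, u, p) ∈ U → pdu3 ψ x u p - χ x u p * pdu3 φ x u p = lam x u p
  contact_x : ∀ x u p, (x, u, p) ∈ U → pdx3 ψ x u p - χ x u p * pdx3 φ x u p = -p * lam x u p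

/-- `u` is a smooth solution of the third-order ODE `u''' = f(x,u,u',u'')` on `I`. -/
def SolvesODE3 (f : Fn) (I : Set ℝ) (u : ℝ → ℝ) : Prop :=
  ContDiffOn ℝ (⊤ : ℕ∞) u I ∧
  ∀ x ∈ I, deriv (deriv (deriv u)) x = f x (u x) (deriv u x) (deriv (deriv u) x)

/-- The ODE `u''' = f(x,u,u',u'')` is equivalent to `ū''' = f̄(x̄,ū,ū',ū'')` under the
contact transformation `(φ, ψ, χ)` on `U`: for every smooth solution `u` of the first
equation, defined on an open interval, whose prolonged graph `(x, u(x), u'(x))` lies in `U`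
and for which `x̄(x) := φ(x,u(x),u'(x))` has nonvanishing derivative, the function `v` of
`x̄` defined by `v(x̄(x)) = ψ(x,u(x),u'(x))` is a smooth solution of the second equation
and satisfies `dv/dx̄ = χ(x,u(x),u'(x))`. -/
def ContactEquivOn (f fbar : Fn) (U : Set (ℝ × ℝ × ℝ)) (φ ψ χ : Fn3) : Prop :=
  ∀ (I : Set ℝ) (u : ℝ → ℝ), IsOpen I → I.OrdConnected →
    SolvesODE3 f I u →
    (∀ x ∈ I, (x, u x, deriv u x) ∈ U) →
    (∀ x ∈ I, deriv (fun t => φ t (u t) (deriv u t)) x ≠ 0) →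
    ∃ v : ℝ → ℝ,
      ContDiffOn ℝ (⊤ : ℕ∞) v ((fun t => φ t (u t) (deriv u t)) '' I) ∧
      (∀ x ∈ I, v (φ x (u x) (deriv u x)) = ψ x (u x) (deriv u x)) ∧
      (∀ x ∈ I, deriv v (φ x (u x) (deriv u x)) = χ x (u x) (deriv u x)) ∧
      (∀ y ∈ (fun t => φ t (u t) (deriv u t)) '' I,
        deriv (deriv (deriv v)) y = fbar y (v y) (deriv v y) (deriv (deriv v) y))

/-- A point transformation `(x̄,ū) = (φ(x,u), ψ(x,u))` on an open set `V ⊆ ℝ²`: a smooth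
map with nowhere-vanishing Jacobian determinant. -/
structure IsPointTransformOn (V : Set (ℝ × ℝ)) (φ ψ : ℝ → ℝ → ℝ) : Prop where
  isOpen : IsOpen V
  smooth : ContDiffOn ℝ (⊤ : ℕ∞) (fun v : ℝ × ℝ => (φ v.1 v.2, ψ v.1 v.2)) V
  jac_ne : ∀ x u, (x, u) ∈ V →
    deriv (fun t => φ t u) x * deriv (fun t => ψ x t) u
      - deriv (fun t => φ x t) u * deriv (fun t => ψ t u) x ≠ 0

/-!
Along a solution `u` with `u' = p`, `u'' = q`, `u''' = w` at a point `z`, the derivatives of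
`x̄ = g(x, u(x))` are `x̄' = g_x + p g_u`, `x̄'' = S + g_u q`, `x̄''' = T + R q + g_u w`, with
`S`, `T`, `R` depending only on `g`, `z` and `p` (likewise for `ū = h(x, u(x))`). The third
derivative of `ū` as a function of `x̄` is
`(x̄'² ū''' - x̄' ū' x̄''' - 3 (x̄' ū'' - ū' x̄'') x̄'') / x̄'⁵`; if `ū` solves
`ū''' = F(x̄, ū, ū')` it is the same for all solutions through `z` with slope `p`, whatever `q`.
For `u''' = α u''² / u'` we have `w = α q² / p`, so the coefficient of `q²` must vanish:
`J (α (g_x + p g_u) - 3 p g_u) = 0`, with `J ≠ 0` the Jacobian of `(g, h)`. Solutions with any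
jet `(p > 0, q)` exist in closed form, and three values of `p` give `α g_x² = (α - 3) g_u² = 0`,
which is impossible for `α ≠ 0, 3`.
-/

open Set Filter

lemma ContDiffOn.hasDerivAt_deriv {f : ℝ → ℝ} {s : Set ℝ} (hf : ContDiffOn ℝ (⊤ : ℕ∞) f s)
    (hs : IsOpen s) {x : ℝ} (hx : x ∈ s) : HasDerivAt f (deriv f x) x :=
  ((hf.differentiableOn (by simp)).differentiableAt (hs.mem_nhds hx)).hasDerivAt

lemma ContDiffOn.deriv_of_isOpen_infty {f : ℝ → ℝ} {s : Set ℝ} (hf : ContDiffOn ℝ (⊤ : ℕ∞) f s)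
    (hs : IsOpen s) : ContDiffOn ℝ (⊤ : ℕ∞) (deriv f) s :=
  ((contDiffOn_infty_iff_deriv_of_isOpen hs).1 hf).2

def partialFst (g : ℝ × ℝ → ℝ) (z : ℝ × ℝ) : ℝ := fderiv ℝ g z (1, 0)

def partialSnd (g : ℝ × ℝ → ℝ) (z : ℝ × ℝ) : ℝ := fderiv ℝ g z (0, 1)

local notation "∂₁" => partialFst
local notation "∂₂" => partialSnd

section Partial

variable {V : Set (ℝ × ℝ)} {g : ℝ × ℝ → ℝ}

lemma ContDiffOn.partialFst (hg : ContDiffOn ℝ (⊤ : ℕ∞) g V) (hV : IsOpen V) :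
    ContDiffOn ℝ (⊤ : ℕ∞) (∂₁ g) V :=
  (hg.fderiv_of_isOpen hV (by simp)).clm_apply contDiffOn_const

lemma ContDiffOn.partialSnd (hg : ContDiffOn ℝ (⊤ : ℕ∞) g V) (hV : IsOpen V) :
    ContDiffOn ℝ (⊤ : ℕ∞) (∂₂ g) V :=
  (hg.fderiv_of_isOpen hV (by simp)).clm_apply contDiffOn_const

lemma DifferentiableAt.hasDerivAt_comp_prodMk {a b : ℝ → ℝ} {a' b' x : ℝ}
    (hg : DifferentiableAt ℝ g (a x, b x)) (ha : HasDerivAt a a' x) (hb : HasDerivAt b b' x) :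
    HasDerivAt (fun t => g (a t, b t)) (a' * ∂₁ g (a x, b x) + b' * ∂₂ g (a x, b x)) x := by
  refine (hg.hasFDerivAt.comp_hasDerivAt x (ha.prodMk hb)).congr_deriv ?_
  have hsplit : (a', b') = a' • ((1 : ℝ), (0 : ℝ)) + b' • ((0 : ℝ), (1 : ℝ)) := by simp
  rw [hsplit, map_add, map_smul, map_smul, smul_eq_mul, smul_eq_mul]
  rfl

lemma hasDerivAt_comp_graph (hg : ContDiffOn ℝ (⊤ : ℕ∞) g V) (hV : IsOpen V) {u : ℝ → ℝ}
    {I : Set ℝ} (hu : ContDiffOn ℝ (⊤ : ℕ∞) u I) (hI : IsOpen I) (hgraph : ∀ t ∈ I, (t, u t) ∈ V)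
    {x : ℝ} (hx : x ∈ I) :
    HasDerivAt (fun t => g (t, u t)) (∂₁ g (x, u x) + deriv u x * ∂₂ g (x, u x)) x := by
  simpa using DifferentiableAt.hasDerivAt_comp_prodMk
    ((hg.differentiableOn (by simp)).differentiableAt (hV.mem_nhds (hgraph x hx)))
    (hasDerivAt_id x) (hu.hasDerivAt_deriv hI hx)

theorem exists_graph_jet (hg : ContDiffOn ℝ (⊤ : ℕ∞) g V) (hV : IsOpen V) (z : ℝ × ℝ) (p : ℝ) :
    ∃ S T R : ℝ, ∀ (I : Set ℝ) (u : ℝ → ℝ) (x : ℝ), IsOpen I → x ∈ I →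
      ContDiffOn ℝ (⊤ : ℕ∞) u I → (∀ t ∈ I, (t, u t) ∈ V) → (x, u x) = z → deriv u x = p →
      deriv (fun t => g (t, u t)) x = ∂₁ g z + p * ∂₂ g z ∧
      deriv (deriv fun t => g (t, u t)) x = S + ∂₂ g z * deriv (deriv u) x ∧
      deriv (deriv (deriv fun t => g (t, u t))) x
        = T + R * deriv (deriv u) x + ∂₂ g z * deriv (deriv (deriv u)) x := by
  have h₁ := hg.partialFst hV
  have h₂ := hg.partialSnd hV
  refine ⟨∂₁ (∂₁ g) z + p * ∂₂ (∂₁ g) z + p * (∂₁ (∂₂ g) z + p * ∂₂ (∂₂ g) z),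
    ∂₁ (∂₁ (∂₁ g)) z + p * ∂₂ (∂₁ (∂₁ g)) z + p * (∂₁ (∂₂ (∂₁ g)) z + p * ∂₂ (∂₂ (∂₁ g)) z)
      + p * (∂₁ (∂₁ (∂₂ g)) z + p * ∂₂ (∂₁ (∂₂ g)) z
        + p * (∂₁ (∂₂ (∂₂ g)) z + p * ∂₂ (∂₂ (∂₂ g)) z)),
    ∂₂ (∂₁ g) z + 2 * (∂₁ (∂₂ g) z + p * ∂₂ (∂₂ g) z) + p * ∂₂ (∂₂ g) z, ?_⟩
  rintro I u x hI hx hu hgraph rfl rfl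
  have hu₁ := hu.deriv_of_isOpen_infty hI
  have hu₂ := hu₁.deriv_of_isOpen_infty hI
  have along : ∀ {G : ℝ × ℝ → ℝ}, ContDiffOn ℝ (⊤ : ℕ∞) G V → ∀ t ∈ I,
      HasDerivAt (fun t => G (t, u t)) (∂₁ G (t, u t) + deriv u t * ∂₂ G (t, u t)) t :=
    fun hG t ht => hasDerivAt_comp_graph hG hV hu hI hgraph ht
  have first : EqOn (deriv fun t => g (t, u t))
      (fun t => ∂₁ g (t, u t) + deriv u t * ∂₂ g (t, u t)) I :=
    fun t ht => (along hg t ht).deriv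
  have second : EqOn (deriv (deriv fun t => g (t, u t)))
      (fun t => ∂₁ (∂₁ g) (t, u t) + deriv u t * ∂₂ (∂₁ g) (t, u t)
        + (deriv (deriv u) t * ∂₂ g (t, u t)
          + deriv u t * (∂₁ (∂₂ g) (t, u t) + deriv u t * ∂₂ (∂₂ g) (t, u t)))) I :=
    fun t ht => (first.deriv hI ht).trans
      ((along h₁ t ht).add ((hu₁.hasDerivAt_deriv hI ht).mul (along h₂ t ht))).deriv
  refine ⟨(along hg x hx).deriv, (second hx).trans (by ring), ?_⟩
  have hd₁ := hu₁.hasDerivAt_deriv hI hx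
  have hd₂ := hu₂.hasDerivAt_deriv hI hx
  rw [(second.deriv hI hx).trans
    (((along (h₁.partialFst hV) x hx).add (hd₁.mul (along (h₁.partialSnd hV) x hx))).add
      ((hd₂.mul (along h₂ x hx)).add (hd₁.mul ((along (h₂.partialFst hV) x hx).add
        (hd₁.mul (along (h₂.partialSnd hV) x hx)))))).deriv]
  simp only [Pi.add_apply, Pi.mul_apply]
  ring

end Partial

theorem faaDiBruno_three {v X Y : ℝ → ℝ} {s t : Set ℝ} (hs : IsOpen s) (ht : IsOpen t)
    (hv : ContDiffOn ℝ (⊤ : ℕ∞) v t) (hX : ContDiffOn ℝ (⊤ : ℕ∞) X s) (hXst : MapsTo X s t)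
    (hY : EqOn Y (v ∘ X) s) {x : ℝ} (hx : x ∈ s) :
    deriv Y x = deriv v (X x) * deriv X x ∧
    deriv (deriv Y) x = deriv (deriv v) (X x) * deriv X x ^ 2 + deriv v (X x) * deriv (deriv X) x ∧
    deriv (deriv (deriv Y)) x = deriv (deriv (deriv v)) (X x) * deriv X x ^ 3
      + 3 * deriv (deriv v) (X x) * deriv X x * deriv (deriv X) x
      + deriv v (X x) * deriv (deriv (deriv X)) x := by
  have hv₁ := hv.deriv_of_isOpen_infty ht
  have hv₂ := hv₁.deriv_of_isOpen_infty ht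
  have hX₁ := hX.deriv_of_isOpen_infty hs
  have hX₂ := hX₁.deriv_of_isOpen_infty hs
  have comp : ∀ {w : ℝ → ℝ}, ContDiffOn ℝ (⊤ : ℕ∞) w t → ∀ y ∈ s,
      HasDerivAt (fun y => w (X y)) (deriv w (X y) * deriv X y) y :=
    fun hw y hy => (hw.hasDerivAt_deriv ht (hXst hy)).comp y (hX.hasDerivAt_deriv hs hy)
  have first : EqOn (deriv Y) (fun y => deriv v (X y) * deriv X y) s :=
    fun y hy => (hY.deriv hs hy).trans (comp hv y hy).deriv
  have second : EqOn (deriv (deriv Y))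
      (fun y => deriv (deriv v) (X y) * deriv X y * deriv X y
        + deriv v (X y) * deriv (deriv X) y) s :=
    fun y hy => (first.deriv hs hy).trans
      ((comp hv₁ y hy).mul (hX₁.hasDerivAt_deriv hs hy)).deriv
  refine ⟨first hx, (second hx).trans (by ring), ?_⟩
  rw [(second.deriv hs hx).trans
    ((((comp hv₂ x hx).mul (hX₁.hasDerivAt_deriv hs hx)).mul (hX₁.hasDerivAt_deriv hs hx)).add
      ((comp hv₁ x hx).mul (hX₂.hasDerivAt_deriv hs hx))).deriv]
  simp only [Pi.mul_apply]
  ring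

lemma exists_hasDerivAt_of_continuousOn {S : Set ℝ} (hS : IsOpen S) (hSc : S.OrdConnected)
    {x₀ : ℝ} (hx₀ : x₀ ∈ S) {w : ℝ → ℝ} (hw : ContinuousOn w S) (c : ℝ) :
    ∃ u : ℝ → ℝ, u x₀ = c ∧ ∀ x ∈ S, HasDerivAt u (w x) x := by
  refine ⟨fun x => c + ∫ t in x₀..x, w t, by simp, fun x hx => ?_⟩
  refine (intervalIntegral.integral_hasDerivAt_right ?_
    (hw.stronglyMeasurableAtFilter hS x hx) (hw.continuousAt (hS.mem_nhds hx))).const_add c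
  exact (hw.mono (hSc.uIcc_subset hx₀ hx)).intervalIntegrable

lemma exists_solution_second_order (α x₀ p q : ℝ) (hp : 0 < p) :
    ∃ (S : Set ℝ) (w w' : ℝ → ℝ), IsOpen S ∧ S.OrdConnected ∧ x₀ ∈ S ∧
      ContDiffOn ℝ (⊤ : ℕ∞) w S ∧ w x₀ = p ∧ w' x₀ = q ∧
      ∀ x ∈ S, 0 < w x ∧ HasDerivAt w (w' x) x ∧ HasDerivAt w' (α * w' x ^ 2 / w x) x := by
  have hlin : ∀ c x : ℝ, HasDerivAt (fun x => c * (x - x₀)) c x := fun c x => by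
    simpa using ((hasDerivAt_id x).sub_const x₀).const_mul c
  rcases eq_or_ne α 1 with rfl | hα
  · refine ⟨univ, fun x => p * Real.exp (q / p * (x - x₀)),
      fun x => q * Real.exp (q / p * (x - x₀)), isOpen_univ, ordConnected_univ, trivial,
      by fun_prop, by simp, by simp, fun x _ => ⟨by positivity, ?_, ?_⟩⟩
    · exact ((hlin _ x).exp.const_mul p).congr_deriv (by field_simp)
    · exact ((hlin _ x).exp.const_mul q).congr_deriv (by field_simp)
  set β := (1 - α)⁻¹
  set c := q * (1 - α) / p
  have hα' : 1 - α ≠ 0 := sub_ne_zero.mpr hα.symm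
  have hβ : p * (c * β) = q := by simp only [c, β]; field_simp
  have hβ' : p * (c * (β - 1)) = α * q := by simp only [c, β]; field_simp; ring
  refine ⟨{x | 0 < 1 + c * (x - x₀)}, fun x => p * (1 + c * (x - x₀)) ^ β,
    fun x => q * (1 + c * (x - x₀)) ^ (β - 1),
    isOpen_lt continuous_const (by fun_prop), ⟨fun x hx y hy z hz => ?_⟩, by simp, ?_,
    by simp, by simp, fun x (hx : 0 < _) => ⟨mul_pos hp (Real.rpow_pos_of_pos hx β), ?_, ?_⟩⟩
  · have hx' : 0 < 1 + c * (x - x₀) := hx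
    have hy' : 0 < 1 + c * (y - x₀) := hy
    show 0 < 1 + c * (z - x₀)
    rcases le_total 0 c with hc | hc <;> nlinarith [hz.1, hz.2]
  · exact fun x hx => ContDiffAt.contDiffWithinAt <|
      contDiffAt_const.mul ((by fun_prop : ContDiffAt ℝ _ _ x).rpow_const_of_ne hx.ne')
  · refine (((hlin c x).const_add 1).rpow_const (Or.inl hx.ne')).const_mul p |>.congr_deriv ?_
    linear_combination (1 + c * (x - x₀)) ^ (β - 1) * hβ
  · refine (((hlin c x).const_add 1).rpow_const (Or.inl hx.ne')).const_mul q |>.congr_deriv ?_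
    have hsq : ((1 + c * (x - x₀)) ^ (β - 1)) ^ 2
        = (1 + c * (x - x₀)) ^ (β - 1 - 1) * (1 + c * (x - x₀)) ^ β := by
      rw [sq, ← Real.rpow_add hx, ← Real.rpow_add hx]
      ring_nf
    rw [mul_pow, hsq, eq_div_iff (by positivity)]
    linear_combination q * (1 + c * (x - x₀)) ^ (β - 1 - 1) * (1 + c * (x - x₀)) ^ β * hβ'

theorem exists_solution_with_jet (α x₀ u₀ p q : ℝ) (hp : 0 < p) :
    ∃ (S : Set ℝ) (u : ℝ → ℝ), IsOpen S ∧ S.OrdConnected ∧ x₀ ∈ S ∧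
      SolvesODE3 (fun _ _ p' q' => α * q' ^ 2 / p') S u ∧ (∀ x ∈ S, 0 < deriv u x) ∧
      u x₀ = u₀ ∧ deriv u x₀ = p ∧ deriv (deriv u) x₀ = q := by
  obtain ⟨S, w, w', hS, hSc, hx₀, hw, hwx₀, hw'x₀, hsol⟩ :=
    exists_solution_second_order α x₀ p q hp
  obtain ⟨u, hux₀, hu⟩ := exists_hasDerivAt_of_continuousOn hS hSc hx₀ hw.continuousOn u₀
  have h₁ : EqOn (deriv u) w S := fun x hx => (hu x hx).deriv
  have h₂ : EqOn (deriv (deriv u)) w' S := fun x hx => (h₁.deriv hS hx).trans (hsol x hx).2.1.deriv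
  refine ⟨S, u, hS, hSc, hx₀, ⟨?_, fun x hx => ?_⟩, fun x hx => h₁ hx ▸ (hsol x hx).1, hux₀,
    h₁ hx₀ ▸ hwx₀, h₂ hx₀ ▸ hw'x₀⟩
  · exact (contDiffOn_infty_iff_deriv_of_isOpen hS).2
      ⟨fun x hx => (hu x hx).differentiableAt.differentiableWithinAt, hw.congr h₁⟩
  · rw [(h₂.deriv hS hx).trans (hsol x hx).2.2.deriv, h₁ hx, h₂ hx]

lemma IsOpen.image_of_deriv_ne_zero {X : ℝ → ℝ} {I : Set ℝ} (hI : IsOpen I)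
    (hX : ContDiffOn ℝ (⊤ : ℕ∞) X I) (h : ∀ x ∈ I, deriv X x ≠ 0) : IsOpen (X '' I) := by
  refine isOpen_iff_mem_nhds.2 ?_
  rintro _ ⟨x, hx, rfl⟩
  rw [← ((hX.contDiffAt (hI.mem_nhds hx)).hasStrictDerivAt (by simp)).map_nhds_eq (h x hx)]
  exact image_mem_map (hI.mem_nhds hx)

theorem exists_local_solution_with_jet (α : ℝ) {V : Set (ℝ × ℝ)} (hV : IsOpen V)
    {g : ℝ × ℝ → ℝ} (hg : ContDiffOn ℝ (⊤ : ℕ∞) g V) {x₀ u₀ p : ℝ} (hz : (x₀, u₀) ∈ V)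
    (hp : 0 < p) (hA : ∂₁ g (x₀, u₀) + p * ∂₂ g (x₀, u₀) ≠ 0) (q : ℝ) :
    ∃ (I : Set ℝ) (u : ℝ → ℝ), IsOpen I ∧ I.OrdConnected ∧ x₀ ∈ I ∧
      SolvesODE3 (fun _ _ p' q' => α * q' ^ 2 / p') I u ∧ (∀ x ∈ I, deriv u x ≠ 0) ∧
      (∀ x ∈ I, (x, u x) ∈ V) ∧ (∀ x ∈ I, deriv (fun t => g (t, u t)) x ≠ 0) ∧
      u x₀ = u₀ ∧ deriv u x₀ = p ∧ deriv (deriv u) x₀ = q := by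
  obtain ⟨S, u, hS, -, hx₀, hsol, hu', hu₀, hup, huq⟩ := exists_solution_with_jet α x₀ u₀ p q hp
  have hgraph : ContinuousOn (fun t => (t, u t)) S := continuousOn_id.prodMk hsol.1.continuousOn
  set O := S ∩ (fun t => (t, u t)) ⁻¹' V
  have hO : IsOpen O := hgraph.isOpen_inter_preimage hS hV
  have hXO : ContDiffOn ℝ (⊤ : ℕ∞) (fun t => g (t, u t)) O :=
    hg.comp (contDiffOn_id.prodMk (hsol.1.mono inter_subset_left)) fun _ ht => ht.2
  set O' := O ∩ deriv (fun t => g (t, u t)) ⁻¹' {0}ᶜ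
  have hO' : IsOpen O' := (hXO.continuousOn_deriv_of_isOpen hO (by simp)).isOpen_inter_preimage
    hO isOpen_compl_singleton
  have hx₀O : x₀ ∈ O := ⟨hx₀, by simpa [hu₀] using hz⟩
  have hx₀O' : x₀ ∈ O' := by
    refine ⟨hx₀O, ?_⟩
    rw [mem_preimage, (hasDerivAt_comp_graph hg hV (hsol.1.mono inter_subset_left) hO
      (fun _ ht => ht.2) hx₀O).deriv, hu₀, hup]
    exact hA
  obtain ⟨l, r, hx₀I, hIO'⟩ := mem_nhds_iff_exists_Ioo_subset.1 (hO'.mem_nhds hx₀O')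
  refine ⟨Ioo l r, u, isOpen_Ioo, ordConnected_Ioo, hx₀I,
    ⟨hsol.1.mono fun x hx => (hIO' hx).1.1, fun x hx => hsol.2 x (hIO' hx).1.1⟩,
    fun x hx => (hu' x (hIO' hx).1.1).ne', fun x hx => (hIO' hx).1.2,
    fun x hx => (hIO' hx).2, hu₀, hup, huq⟩

/-- The negation of the conclusion of `example1_not_point_linearizable`, for the target equation
`ū''' = F(x̄, ū, ū')` and the transformation `(x̄, ū) = (g(x, u), h(x, u))`. -/
def TransformsSolutions (α : ℝ) (F : ℝ → ℝ → ℝ → ℝ) (V : Set (ℝ × ℝ)) (g h : ℝ × ℝ → ℝ) :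
    Prop :=
  ∀ (I : Set ℝ) (u : ℝ → ℝ), IsOpen I → I.OrdConnected → I.Nonempty →
    SolvesODE3 (fun _ _ p' q' => α * q' ^ 2 / p') I u → (∀ x ∈ I, deriv u x ≠ 0) →
    (∀ x ∈ I, (x, u x) ∈ V) → (∀ x ∈ I, deriv (fun t => g (t, u t)) x ≠ 0) →
    ∃ v : ℝ → ℝ, ContDiffOn ℝ (⊤ : ℕ∞) v ((fun t => g (t, u t)) '' I) ∧
      (∀ x ∈ I, v (g (x, u x)) = h (x, u x)) ∧
      ∀ y ∈ (fun t => g (t, u t)) '' I, deriv (deriv (deriv v)) y = F y (v y) (deriv v y)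

namespace IsPointTransformOn

variable {V : Set (ℝ × ℝ)} {φ ψ : ℝ → ℝ → ℝ}

lemma contDiffOn_fst (hT : IsPointTransformOn V φ ψ) :
    ContDiffOn ℝ (⊤ : ℕ∞) (Function.uncurry φ) V :=
  contDiff_fst.comp_contDiffOn hT.smooth

lemma contDiffOn_snd (hT : IsPointTransformOn V φ ψ) :
    ContDiffOn ℝ (⊤ : ℕ∞) (Function.uncurry ψ) V :=
  contDiff_snd.comp_contDiffOn hT.smooth

lemma jacobian_ne_zero (hT : IsPointTransformOn V φ ψ) {z : ℝ × ℝ} (hz : z ∈ V) :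
    ∂₁ (Function.uncurry φ) z * ∂₂ (Function.uncurry ψ) z
      - ∂₂ (Function.uncurry φ) z * ∂₁ (Function.uncurry ψ) z ≠ 0 := by
  have partials : ∀ {g : ℝ × ℝ → ℝ}, ContDiffOn ℝ (⊤ : ℕ∞) g V →
      deriv (fun t => g (t, z.2)) z.1 = ∂₁ g z ∧ deriv (fun t => g (z.1, t)) z.2 = ∂₂ g z := by
    intro g hg
    have hgz := (hg.differentiableOn (by simp)).differentiableAt (hT.isOpen.mem_nhds hz)
    exact
      ⟨by simpa using (hgz.hasDerivAt_comp_prodMk (hasDerivAt_id _) (hasDerivAt_const _ _)).deriv,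
        by simpa using (hgz.hasDerivAt_comp_prodMk (hasDerivAt_const _ _) (hasDerivAt_id _)).deriv⟩
  obtain ⟨hφ₁, hφ₂⟩ := partials hT.contDiffOn_fst
  obtain ⟨hψ₁, hψ₂⟩ := partials hT.contDiffOn_snd
  simpa only [Function.uncurry, ← hφ₁, ← hφ₂, ← hψ₁, ← hψ₂] using hT.jac_ne z.1 z.2 hz

end IsPointTransformOn

namespace TransformsSolutions

variable {α : ℝ} {F : ℝ → ℝ → ℝ → ℝ} {V : Set (ℝ × ℝ)} {g h : ℝ × ℝ → ℝ}

theorem jacobian_mul_eq_zero (hS : TransformsSolutions α F V g h) (hV : IsOpen V)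
    (hg : ContDiffOn ℝ (⊤ : ℕ∞) g V) (hh : ContDiffOn ℝ (⊤ : ℕ∞) h V) {x₀ u₀ p : ℝ}
    (hz : (x₀, u₀) ∈ V) (hp : 0 < p) (hA : ∂₁ g (x₀, u₀) + p * ∂₂ g (x₀, u₀) ≠ 0) :
    (∂₁ g (x₀, u₀) * ∂₂ h (x₀, u₀) - ∂₂ g (x₀, u₀) * ∂₁ h (x₀, u₀))
      * (α * (∂₁ g (x₀, u₀) + p * ∂₂ g (x₀, u₀)) - 3 * p * ∂₂ g (x₀, u₀)) = 0 := by
  set A := ∂₁ g (x₀, u₀) + p * ∂₂ g (x₀, u₀) with hAdef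
  set B := ∂₁ h (x₀, u₀) + p * ∂₂ h (x₀, u₀) with hBdef
  obtain ⟨Sg, Tg, Rg, jet_g⟩ := exists_graph_jet hg hV (x₀, u₀) p
  obtain ⟨Sh, Th, Rh, jet_h⟩ := exists_graph_jet hh hV (x₀, u₀) p
  have key : ∀ q : ℝ, ∃ w, p * w = α * q ^ 2 ∧
      A ^ 2 * (Th + Rh * q + ∂₂ h (x₀, u₀) * w) - A * B * (Tg + Rg * q + ∂₂ g (x₀, u₀) * w)
        - 3 * (A * (Sh + ∂₂ h (x₀, u₀) * q) - B * (Sg + ∂₂ g (x₀, u₀) * q))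
          * (Sg + ∂₂ g (x₀, u₀) * q) = A ^ 5 * F (g (x₀, u₀)) (h (x₀, u₀)) (B / A) := by
    intro q
    obtain ⟨I, u, hI, hIc, hx₀, hsol, hu', hgraph, hX', hu₀, hup, huq⟩ :=
      exists_local_solution_with_jet α hV hg hz hp hA q
    obtain ⟨v, hv, hvY, hvF⟩ := hS I u hI hIc ⟨x₀, hx₀⟩ hsol hu' hgraph hX'
    have hX : ContDiffOn ℝ (⊤ : ℕ∞) (fun t => g (t, u t)) I :=
      hg.comp (contDiffOn_id.prodMk hsol.1) hgraph
    obtain ⟨e₁, e₂, e₃⟩ := faaDiBruno_three hI (hI.image_of_deriv_ne_zero hX hX') hv hX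
      (mapsTo_image _ _) (fun x hx => (hvY x hx).symm) hx₀
    have hz' : (x₀, u x₀) = (x₀, u₀) := by rw [hu₀]
    obtain ⟨X₁, X₂, X₃⟩ := jet_g I u x₀ hI hx₀ hsol.1 hgraph hz' hup
    obtain ⟨Y₁, Y₂, Y₃⟩ := jet_h I u x₀ hI hx₀ hsol.1 hgraph hz' hup
    have hF := hvF (g (x₀, u x₀)) ⟨x₀, hx₀, rfl⟩
    have hw : deriv (deriv (deriv u)) x₀ = α * q ^ 2 / p := by
      simpa only [hup, huq] using hsol.2 x₀ hx₀
    rw [hvY x₀ hx₀, hz'] at hF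
    rw [← hAdef] at X₁
    rw [← hBdef] at Y₁
    rw [hz', X₁, Y₁] at e₁
    rw [hz'] at e₂ e₃
    have hc₁ : deriv v (g (x₀, u₀)) = B / A := by rw [e₁, mul_div_cancel_right₀ _ hA]
    rw [hc₁] at hF
    simp only [X₁, X₂, X₃, Y₂, Y₃, huq] at e₂ e₃
    refine ⟨deriv (deriv (deriv u)) x₀, by rw [hw]; field_simp, ?_⟩
    linear_combination A ^ 2 * e₃ - 3 * A * (Sg + ∂₂ g (x₀, u₀) * q) * e₂
      - (A * (Tg + Rg * q + ∂₂ g (x₀, u₀) * deriv (deriv (deriv u)) x₀)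
        - 3 * (Sg + ∂₂ g (x₀, u₀) * q) ^ 2) * e₁ + A ^ 5 * hF
  obtain ⟨w₀, hw₀, k₀⟩ := key 0
  obtain ⟨w₁, hw₁, k₁⟩ := key 1
  obtain ⟨w₂, hw₂, k₂⟩ := key (-1)
  linear_combination (p / 2) * (k₁ + k₂ - 2 * k₀)
    - A * (A * ∂₂ h (x₀, u₀) - B * ∂₂ g (x₀, u₀)) / 2 * (hw₁ + hw₂ - 2 * hw₀)

end TransformsSolutions

theorem IsPointTransformOn.not_transformsSolutions {α : ℝ} (hα₀ : α ≠ 0) (hα₃ : α ≠ 3)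
    {V : Set (ℝ × ℝ)} (hV : V.Nonempty) {φ ψ : ℝ → ℝ → ℝ} (hT : IsPointTransformOn V φ ψ)
    (F : ℝ → ℝ → ℝ → ℝ) :
    ¬TransformsSolutions α F V (Function.uncurry φ) (Function.uncurry ψ) := by
  intro hS
  obtain ⟨z, hz⟩ := hV
  have hJ := hT.jacobian_ne_zero hz
  set a₁ := ∂₁ (Function.uncurry φ) z
  set a₂ := ∂₂ (Function.uncurry φ) z
  have key : ∀ p : ℝ, 0 < p → (a₁ + p * a₂) * (α * (a₁ + p * a₂) - 3 * p * a₂) = 0 := by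
    intro p hp
    by_cases hA : a₁ + p * a₂ = 0
    · rw [hA, zero_mul]
    · have := hS.jacobian_mul_eq_zero hT.isOpen hT.contDiffOn_fst hT.contDiffOn_snd hz hp hA
      rw [(mul_eq_zero.1 this).resolve_left hJ, mul_zero]
  have h₁ : α * a₁ ^ 2 = 0 := by
    linear_combination 3 * key 1 one_pos - 3 * key 2 two_pos + key 3 three_pos
  have h₂ : (α - 3) * a₂ ^ 2 = 0 := by
    linear_combination (key 1 one_pos - 2 * key 2 two_pos + key 3 three_pos) / 2
  have ha₁ : a₁ = 0 := pow_eq_zero_iff two_ne_zero |>.1 ((mul_eq_zero.1 h₁).resolve_left hα₀)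
  have ha₂ : a₂ = 0 :=
    pow_eq_zero_iff two_ne_zero |>.1 ((mul_eq_zero.1 h₂).resolve_left (sub_ne_zero.2 hα₃))
  exact hJ (by rw [ha₁, ha₂]; ring)

theorem example1_not_point_linearizable_general (α s : ℝ)
    (hα : α * (α - 3) * (2*α - 3) ≠ 0) :
    ∀ (V : Set (ℝ × ℝ)), V.Nonempty →
      ∀ φ ψ : ℝ → ℝ → ℝ, IsPointTransformOn V φ ψ →
        ∃ (I : Set ℝ) (u : ℝ → ℝ),
          IsOpen I ∧ I.OrdConnected ∧ I.Nonempty ∧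
          SolvesODE3 (fun _ _ p' q' => α * q'^2 / p') I u ∧
          (∀ x ∈ I, deriv u x ≠ 0) ∧
          (∀ x ∈ I, (x, u x) ∈ V) ∧
          (∀ x ∈ I, deriv (fun t => φ t (u t)) x ≠ 0) ∧
          ¬∃ v : ℝ → ℝ,
              ContDiffOn ℝ (⊤ : ℕ∞) v ((fun t => φ t (u t)) '' I) ∧
              (∀ x ∈ I, v (φ x (u x)) = ψ x (u x)) ∧
              (∀ y ∈ (fun t => φ t (u t)) '' I,
                deriv (deriv (deriv v)) y = s * deriv v y + v y) := by
  intro V hV φ ψ hT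
  by_contra! hS
  obtain ⟨hα₀₃, -⟩ := mul_ne_zero_iff.1 hα
  obtain ⟨hα₀, hα₃⟩ := mul_ne_zero_iff.1 hα₀₃
  exact hT.not_transformsSolutions hα₀ (sub_ne_zero.1 hα₃) hV (fun _ v v' => s * v' + v) hS

/-- (Remark 4.1.)  For `α(α−3)(2α−3) ≠ 0`, `m` the real cube root of
`2α³−9α²+9α`, `s = (3α²−9α+9)/m²`, there is no point transformation on any nonempty open
set `V ⊆ ℝ²` under which `u''' = α(u'')²/u'` is equivalent to `ū''' = s·ū' + ū`: for
every such `V` and point transformation there is a smooth solution `u` of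
`u''' = α(u'')²/u'` with `u' ≠ 0`, graph in `V`, and `(φ(x,u(x)))' ≠ 0`, whose transform
fails to solve `ū''' = s·ū' + ū`. -/
theorem example1_not_point_linearizable (α m s : ℝ)
    (hα : α * (α - 3) * (2*α - 3) ≠ 0)
    (hm : m = cbrt (2*α^3 - 9*α^2 + 9*α))
    (hs : s = (3*α^2 - 9*α + 9) / m^2) :
    ∀ (V : Set (ℝ × ℝ)), V.Nonempty →
      ∀ φ ψ : ℝ → ℝ → ℝ, IsPointTransformOn V φ ψ →
        ∃ (I : Set ℝ) (u : ℝ → ℝ),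
          IsOpen I ∧ I.OrdConnected ∧ I.Nonempty ∧
          SolvesODE3 (fun _ _ p' q' => α * q'^2 / p') I u ∧
          (∀ x ∈ I, deriv u x ≠ 0) ∧
          (∀ x ∈ I, (x, u x) ∈ V) ∧
          (∀ x ∈ I, deriv (fun t => φ t (u t)) x ≠ 0) ∧
          ¬∃ v : ℝ → ℝ,
              ContDiffOn ℝ (⊤ : ℕ∞) v ((fun t => φ t (u t)) '' I) ∧
              (∀ x ∈ I, v (φ x (u x)) = ψ x (u x)) ∧
              (∀ y ∈ (fun t => φ t (u t)) '' I,
                deriv (deriv (deriv v)) y = s * deriv v y + v y) :=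
  example1_not_point_linearizable_general α s hα

end
end

section
/- There exist no nonempty open set V ⊆ ℝ², no point transformation (x̄,ū) = (φ(x,u), ψ(x,u)) on V, and no smooth nowhere-vanishing function ā with ((2ā·ā″ − 3(ā′)²)/ā⁴)′ ≠ 0, under which the ODE u‴ = −x·(u′)⁴(u″)³ + u·(u′)³(u″)³ is equivalent to the canonical form ū‴ = ā(x̄)³·ū; that is, for every such V, point transformation and ā there is a smooth solution u(x) of the nonlinear equation with u′ ≠ 0, u″ ≠ 0, graph in V, and (d/dx)φ(x,u(x)) ≠ 0, whose transform fails to solve ū‴ = ā(x̄)³ū. -/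
/-!
Invariants of the third-order ODE `u''' = f(x, u, u', u'')` under contact
transformations, following Cartan's equivalence method.
We write `p = u'`, `q = u''`.
-/

noncomputable section

/-!
Fix a point `(x₀, u₀, p₀)` and let `u_q` be the solution of `u''' = (u - x u') u'³ u''³` with
2-jet `(u₀, p₀, q)` at `x₀`. Along any curve, a point transformation gives `ū' = Y'/X'` and
`X'⁵ ū''' = X'(X'Y''' - Y'X''') - 3X''(X'Y'' - Y'X'')` with `X = φ(x, u)`, `Y = ψ(x, u)`, where
`X''`, `Y''` are affine in `u''` and `X'''`, `Y'''` are affine in `(u'', u''')`. Substituting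
`u''' = K q³` with `K = (u₀ - x₀ p₀) p₀³` makes `X'⁵ ū'''` a cubic in `q` with leading
coefficient `X' · K · (φ_x ψ_u - φ_u ψ_x)`. If `ū''' = ā(x̄)³ ū`, the left side at `x₀` is
`X'⁵ ā(φ(x₀, u₀))³ ψ(x₀, u₀)`, independent of `q`, so that coefficient vanishes, which is
impossible once `p₀` is chosen with `K ≠ 0` and `X' ≠ 0`.
-/

open Set Function Filter Topology
open scoped ContDiff

def pdx2 (G : ℝ → ℝ → ℝ) : ℝ → ℝ → ℝ := fun x u => deriv (fun t => G t u) x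

def pdu2 (G : ℝ → ℝ → ℝ) : ℝ → ℝ → ℝ := fun x u => deriv (fun t => G x t) u

/-- `graphDeriv1`, `graphDeriv2`, `graphDeriv3` are the first three derivatives of
`s ↦ G s (u s)` at `x`, in terms of the jet `(u, p, q, r)` of `u` at `x`. -/
def graphDeriv1 (G : ℝ → ℝ → ℝ) (x u p : ℝ) : ℝ := pdx2 G x u + p * pdu2 G x u

def graphDeriv2 (G : ℝ → ℝ → ℝ) (x u p q : ℝ) : ℝ :=
  graphDeriv1 (pdx2 G) x u p + p * graphDeriv1 (pdu2 G) x u p + q * pdu2 G x u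

def graphDeriv3 (G : ℝ → ℝ → ℝ) (x u p q r : ℝ) : ℝ :=
  graphDeriv2 (pdx2 G) x u p q + p * graphDeriv2 (pdu2 G) x u p q
    + 2 * q * graphDeriv1 (pdu2 G) x u p + r * pdu2 G x u

section GraphCalculus

variable {G : ℝ → ℝ → ℝ}

theorem pdx2_eq_fderiv {x u : ℝ} (hG : DifferentiableAt ℝ (uncurry G) (x, u)) :
    pdx2 G x u = fderiv ℝ (uncurry G) (x, u) (1, 0) := by
  have h := hG.hasFDerivAt.comp_hasDerivAt x ((hasDerivAt_id x).prodMk (hasDerivAt_const x u))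
  exact h.deriv

theorem pdu2_eq_fderiv {x u : ℝ} (hG : DifferentiableAt ℝ (uncurry G) (x, u)) :
    pdu2 G x u = fderiv ℝ (uncurry G) (x, u) (0, 1) := by
  have h := hG.hasFDerivAt.comp_hasDerivAt u ((hasDerivAt_const u x).prodMk (hasDerivAt_id u))
  exact h.deriv

theorem hasDerivAt_comp_graph_s14 {u : ℝ → ℝ} {p t : ℝ}
    (hG : DifferentiableAt ℝ (uncurry G) (t, u t)) (hu : HasDerivAt u p t) :
    HasDerivAt (fun s => G s (u s)) (graphDeriv1 G t (u t) p) t := by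
  have h := hG.hasFDerivAt.comp_hasDerivAt t ((hasDerivAt_id t).prodMk hu)
  have hsplit : ((1 : ℝ), p) = (1, 0) + p • ((0 : ℝ), (1 : ℝ)) := by simp
  rwa [hsplit, map_add, map_smul, ← pdx2_eq_fderiv hG, ← pdu2_eq_fderiv hG, smul_eq_mul] at h

variable {V : Set (ℝ × ℝ)}

theorem contDiffOn_pdx2 (hV : IsOpen V) (hG : ContDiffOn ℝ ∞ (uncurry G) V) :
    ContDiffOn ℝ ∞ (uncurry (pdx2 G)) V := by
  refine ((hG.fderiv_of_isOpen hV le_rfl).clm_apply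
    (contDiffOn_const (c := ((1 : ℝ), (0 : ℝ))))).congr fun z hz => ?_
  exact pdx2_eq_fderiv ((hG.contDiffAt (hV.mem_nhds hz)).differentiableAt (by simp))

theorem contDiffOn_pdu2 (hV : IsOpen V) (hG : ContDiffOn ℝ ∞ (uncurry G) V) :
    ContDiffOn ℝ ∞ (uncurry (pdu2 G)) V := by
  refine ((hG.fderiv_of_isOpen hV le_rfl).clm_apply
    (contDiffOn_const (c := ((0 : ℝ), (1 : ℝ))))).congr fun z hz => ?_
  exact pdu2_eq_fderiv ((hG.contDiffAt (hV.mem_nhds hz)).differentiableAt (by simp))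

end GraphCalculus

theorem hasDerivAt_derivs_of_contDiffOn {f : ℝ → ℝ} {s : Set ℝ} (hs : IsOpen s)
    (hf : ContDiffOn ℝ 3 f s) {x : ℝ} (hx : x ∈ s) :
    HasDerivAt f (deriv f x) x ∧ HasDerivAt (deriv f) (deriv (deriv f) x) x ∧
      HasDerivAt (deriv (deriv f)) (deriv (deriv (deriv f)) x) x := by
  have hf₂ : ContDiffOn ℝ 2 (deriv f) s := hf.deriv_of_isOpen hs (by norm_num)
  have hf₁ : ContDiffOn ℝ 1 (deriv (deriv f)) s := hf₂.deriv_of_isOpen hs (by norm_num)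
  have hd : ∀ {g : ℝ → ℝ} {n : WithTop ℕ∞}, ContDiffOn ℝ n g s → n ≠ 0 →
      HasDerivAt g (deriv g x) x := fun hg hn =>
    ((hg.contDiffAt (hs.mem_nhds hx)).differentiableAt hn).hasDerivAt
  exact ⟨hd hf (by norm_num), hd hf₂ (by norm_num), hd hf₁ (by norm_num)⟩

section GraphJets

variable {G : ℝ → ℝ → ℝ} {V : Set (ℝ × ℝ)} {u p q : ℝ → ℝ} {t : ℝ}

theorem hasDerivAt_graphDeriv1_comp_graph (hV : IsOpen V) (hG : ContDiffOn ℝ ∞ (uncurry G) V)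
    (ht : (t, u t) ∈ V) (hu : HasDerivAt u (p t) t) (hp : HasDerivAt p (q t) t) :
    HasDerivAt (fun s => graphDeriv1 G s (u s) (p s)) (graphDeriv2 G t (u t) (p t) (q t)) t := by
  have hdiff : ∀ {H : ℝ → ℝ → ℝ}, ContDiffOn ℝ ∞ (uncurry H) V →
      DifferentiableAt ℝ (uncurry H) (t, u t) := fun hH =>
    (hH.contDiffAt (hV.mem_nhds ht)).differentiableAt (by simp)
  have hx := hasDerivAt_comp_graph_s14 (hdiff (contDiffOn_pdx2 hV hG)) hu
  have hu' := hasDerivAt_comp_graph_s14 (hdiff (contDiffOn_pdu2 hV hG)) hu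
  exact (hx.add (hp.mul hu')).congr_deriv (by simp only [graphDeriv2]; ring)

theorem hasDerivAt_graphDeriv2_comp_graph (hV : IsOpen V) (hG : ContDiffOn ℝ ∞ (uncurry G) V)
    (ht : (t, u t) ∈ V) (hu : HasDerivAt u (p t) t) (hp : HasDerivAt p (q t) t) {r : ℝ}
    (hq : HasDerivAt q r t) :
    HasDerivAt (fun s => graphDeriv2 G s (u s) (p s) (q s))
      (graphDeriv3 G t (u t) (p t) (q t) r) t := by
  have hx := hasDerivAt_graphDeriv1_comp_graph hV (contDiffOn_pdx2 hV hG) ht hu hp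
  have hu₁ := hasDerivAt_graphDeriv1_comp_graph hV (contDiffOn_pdu2 hV hG) ht hu hp
  have hu₀ := hasDerivAt_comp_graph_s14
    (((contDiffOn_pdu2 hV hG).contDiffAt (hV.mem_nhds ht)).differentiableAt (by simp)) hu
  exact ((hx.add (hp.mul hu₁)).add (hq.mul hu₀)).congr_deriv (by simp only [graphDeriv3]; ring)

theorem derivs_comp_graph (hV : IsOpen V) (hG : ContDiffOn ℝ ∞ (uncurry G) V) {I : Set ℝ}
    (hI : IsOpen I) (hu : ContDiffOn ℝ 3 u I) (hIV : ∀ s ∈ I, (s, u s) ∈ V) (ht : t ∈ I) :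
    deriv (fun s => G s (u s)) t = graphDeriv1 G t (u t) (deriv u t) ∧
    deriv (deriv fun s => G s (u s)) t =
      graphDeriv2 G t (u t) (deriv u t) (deriv (deriv u) t) ∧
    deriv (deriv (deriv fun s => G s (u s))) t =
      graphDeriv3 G t (u t) (deriv u t) (deriv (deriv u) t) (deriv (deriv (deriv u)) t) := by
  have hd := fun s (hs : s ∈ I) => hasDerivAt_derivs_of_contDiffOn hI hu hs
  have h₁ : EqOn (deriv fun s => G s (u s)) (fun s => graphDeriv1 G s (u s) (deriv u s)) I :=
    fun s hs => (hasDerivAt_comp_graph_s14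
      ((hG.contDiffAt (hV.mem_nhds (hIV s hs))).differentiableAt (by simp)) (hd s hs).1).deriv
  have h₂ : EqOn (deriv (deriv fun s => G s (u s)))
      (fun s => graphDeriv2 G s (u s) (deriv u s) (deriv (deriv u) s)) I := fun s hs => by
    rw [(h₁.eventuallyEq_of_mem (hI.mem_nhds hs)).deriv_eq]
    exact (hasDerivAt_graphDeriv1_comp_graph hV hG (hIV s hs) (hd s hs).1 (hd s hs).2.1).deriv
  refine ⟨h₁ ht, h₂ ht, ?_⟩
  rw [(h₂.eventuallyEq_of_mem (hI.mem_nhds ht)).deriv_eq]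
  exact (hasDerivAt_graphDeriv2_comp_graph hV hG (hIV t ht) (hd t ht).1 (hd t ht).2.1
    (hd t ht).2.2).deriv

end GraphJets

theorem isOpen_image_of_deriv_ne_zero {f : ℝ → ℝ} {s : Set ℝ} (hs : IsOpen s)
    (hf : ContDiffOn ℝ 1 f s) (hf' : ∀ x ∈ s, deriv f x ≠ 0) : IsOpen (f '' s) := by
  refine isOpen_iff_mem_nhds.2 ?_
  rintro _ ⟨x, hx, rfl⟩
  rw [← ((hf.contDiffAt (hs.mem_nhds hx)).hasStrictDerivAt one_ne_zero).map_nhds_eq (hf' x hx)]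
  exact image_mem_map (hs.mem_nhds hx)

/-- Eliminating `v'` and `v''` from the chain rule for `Y = v ∘ X` up to order three. -/
theorem deriv_pow_five_mul_deriv3_of_eqOn_comp {I S : Set ℝ} (hI : IsOpen I) (hS : IsOpen S)
    {X Y v : ℝ → ℝ} (hX : ContDiffOn ℝ 3 X I) (hv : ContDiffOn ℝ 3 v S) (hXS : MapsTo X I S)
    (hY : EqOn Y (v ∘ X) I) {t : ℝ} (ht : t ∈ I) :
    deriv X t ^ 5 * deriv (deriv (deriv v)) (X t) =
      deriv X t * (deriv X t * deriv (deriv (deriv Y)) t - deriv Y t * deriv (deriv (deriv X)) t)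
        - 3 * deriv (deriv X) t *
          (deriv X t * deriv (deriv Y) t - deriv Y t * deriv (deriv X) t) := by
  have dX := fun s (hs : s ∈ I) => hasDerivAt_derivs_of_contDiffOn hI hX hs
  have dv := fun s (hs : s ∈ I) => hasDerivAt_derivs_of_contDiffOn hS hv (hXS hs)
  have h₁ : EqOn (deriv Y) (fun s => deriv v (X s) * deriv X s) I := fun s hs => by
    rw [(hY.eventuallyEq_of_mem (hI.mem_nhds hs)).deriv_eq]
    exact ((dv s hs).1.comp s (dX s hs).1).deriv
  have h₂ : EqOn (deriv (deriv Y))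
      (fun s => deriv (deriv v) (X s) * deriv X s ^ 2 + deriv v (X s) * deriv (deriv X) s) I :=
    fun s hs => by
      rw [(h₁.eventuallyEq_of_mem (hI.mem_nhds hs)).deriv_eq]
      have h := ((dv s hs).2.1.comp s (dX s hs).1).mul (dX s hs).2.1
      exact h.deriv.trans (by simp only [Function.comp]; ring)
  have h₃ : deriv (deriv (deriv Y)) t =
      deriv (deriv (deriv v)) (X t) * deriv X t ^ 3
        + 3 * deriv (deriv v) (X t) * deriv X t * deriv (deriv X) t
        + deriv v (X t) * deriv (deriv (deriv X)) t := by
    rw [(h₂.eventuallyEq_of_mem (hI.mem_nhds ht)).deriv_eq]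
    have h := ((((dv t ht).2.2.comp t (dX t ht).1).mul ((dX t ht).2.1.pow 2)).add
      (((dv t ht).2.1.comp t (dX t ht).1).mul (dX t ht).2.2))
    exact h.deriv.trans (by simp only [Function.comp, Pi.pow_apply]; ring)
  rw [h₁ ht, h₂ ht, h₃]
  ring

/-- `(dx̄/dx)⁵ · ū'''` for the image `ū(x̄)` under `(x̄, ū) = (φ, ψ)` of a curve whose
jet at `x` is `(u, p, q, r) = (u, u', u'', u''')`. -/
def scaledTransformedThirdDeriv (φ ψ : ℝ → ℝ → ℝ) (x u p q r : ℝ) : ℝ :=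
  graphDeriv1 φ x u p * (graphDeriv1 φ x u p * graphDeriv3 ψ x u p q r
      - graphDeriv1 ψ x u p * graphDeriv3 φ x u p q r)
    - 3 * graphDeriv2 φ x u p q * (graphDeriv1 φ x u p * graphDeriv2 ψ x u p q
      - graphDeriv1 ψ x u p * graphDeriv2 φ x u p q)

theorem graphDeriv1_pow_five_mul_deriv3_eq {V : Set (ℝ × ℝ)} (hV : IsOpen V)
    {φ ψ : ℝ → ℝ → ℝ} (hφ : ContDiffOn ℝ ∞ (uncurry φ) V) (hψ : ContDiffOn ℝ ∞ (uncurry ψ) V)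
    {I : Set ℝ} (hI : IsOpen I) {u : ℝ → ℝ} (hu : ContDiffOn ℝ ∞ u I)
    (hIV : ∀ s ∈ I, (s, u s) ∈ V) (hX : ∀ s ∈ I, deriv (fun s => φ s (u s)) s ≠ 0)
    {v : ℝ → ℝ} (hv : ContDiffOn ℝ ∞ v ((fun s => φ s (u s)) '' I))
    (hvψ : ∀ s ∈ I, v (φ s (u s)) = ψ s (u s)) {t : ℝ} (ht : t ∈ I) :
    graphDeriv1 φ t (u t) (deriv u t) ^ 5 * deriv (deriv (deriv v)) (φ t (u t)) =
      scaledTransformedThirdDeriv φ ψ t (u t) (deriv u t) (deriv (deriv u) t)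
        (deriv (deriv (deriv u)) t) := by
  have hgraph : ContDiffOn ℝ ∞ (fun s => (s, u s)) I := contDiffOn_id.prodMk hu
  have hXsmooth : ContDiffOn ℝ ∞ (fun s => φ s (u s)) I := hφ.comp hgraph hIV
  have hu₃ : ContDiffOn ℝ 3 u I := hu.of_le ENat.LEInfty.out
  obtain ⟨hX₁, hX₂, hX₃⟩ := derivs_comp_graph hV hφ hI hu₃ hIV ht
  obtain ⟨hY₁, hY₂, hY₃⟩ := derivs_comp_graph hV hψ hI hu₃ hIV ht
  have h := deriv_pow_five_mul_deriv3_of_eqOn_comp hI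
    (isOpen_image_of_deriv_ne_zero hI (hXsmooth.of_le ENat.LEInfty.out) hX)
    (hXsmooth.of_le ENat.LEInfty.out) (hv.of_le ENat.LEInfty.out)
    (mapsTo_image _ _) (fun s hs => (hvψ s hs).symm) ht
  rw [hX₁, hX₂, hX₃, hY₁, hY₂, hY₃] at h
  exact h

/-- Along solutions of `u''' = K q³` through a fixed point `(x, u, p)`, the transformed third
derivative is a cubic in `q = u''` whose leading coefficient is `(dx̄/dx) · K · Jacobian`. -/
theorem leading_coeff_eq_zero_of_scaledTransformedThirdDeriv_eq {φ ψ : ℝ → ℝ → ℝ}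
    {x u p K c : ℝ} (h : ∀ q : ℝ, q ≠ 0 → scaledTransformedThirdDeriv φ ψ x u p q (K * q ^ 3) = c) :
    graphDeriv1 φ x u p * K * (pdx2 φ x u * pdu2 ψ x u - pdu2 φ x u * pdx2 ψ x u) = 0 := by
  have h₁ := h 1 one_ne_zero
  have h₂ := h 2 two_ne_zero
  have h₃ := h 3 three_ne_zero
  have h₄ := h 4 four_ne_zero
  simp only [scaledTransformedThirdDeriv, graphDeriv3, graphDeriv2, graphDeriv1] at h₁ h₂ h₃ h₄ ⊢
  linear_combination (-h₁ + 3 * h₂ - 3 * h₃ + h₄) / 6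


theorem exists_contDiffOn_hasDerivAt_of_contDiff {E : Type*} [NormedAddCommGroup E]
    [NormedSpace ℝ E] [CompleteSpace E] {W : E → E} (hW : ContDiff ℝ ∞ W) (t₀ : ℝ) (y₀ : E) :
    ∃ ε > 0, ∃ Y : ℝ → E, Y t₀ = y₀ ∧ ContDiffOn ℝ ∞ Y (Ioo (t₀ - ε) (t₀ + ε)) ∧
      ∀ t ∈ Ioo (t₀ - ε) (t₀ + ε), HasDerivAt Y (W (Y t)) t := by
  obtain ⟨Y, hY₀, ε, hε, hY⟩ :=
    (hW.contDiffAt (x := y₀).of_le ENat.LEInfty.out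
      ).exists_forall_mem_closedBall_exists_eq_forall_mem_Ioo_hasDerivAt₀ t₀
  have hsub : Icc (t₀ - ε / 2) (t₀ + ε / 2) ⊆ Ioo (t₀ - ε) (t₀ + ε) :=
    Icc_subset_Ioo (by linarith) (by linarith)
  -- Smoothness of solutions is available on closed intervals, hence the halved radius.
  have hsmooth : ContDiffOn ℝ ∞ Y (Icc (t₀ - ε / 2) (t₀ + ε / 2)) :=
    ODE.contDiffOn_enat_Icc_of_hasDerivWithinAt (f := fun _ => W) (n := ⊤)
      (hW.comp contDiff_snd).contDiffOn (fun t ht => (hY t (hsub ht)).hasDerivWithinAt)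
      (mapsTo_univ _ _)
  exact ⟨ε / 2, by positivity, Y, hY₀, hsmooth.mono Ioo_subset_Icc_self,
    fun t ht => hY t (hsub (Ioo_subset_Icc_self ht))⟩

theorem exists_solvesODE3 {f : Fn}
    (hf : ContDiff ℝ ∞ fun y : ℝ × ℝ × ℝ × ℝ => f y.1 y.2.1 y.2.2.1 y.2.2.2) (x₀ u₀ p₀ q₀ : ℝ) :
    ∃ ε > 0, ∃ u : ℝ → ℝ, SolvesODE3 f (Ioo (x₀ - ε) (x₀ + ε)) u ∧
      u x₀ = u₀ ∧ deriv u x₀ = p₀ ∧ deriv (deriv u) x₀ = q₀ := by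
  -- the state `(x, u, u', u'')` evolves autonomously, with `x' = 1`
  let W : (Fin 4 → ℝ) → Fin 4 → ℝ := fun y => ![1, y 2, y 3, f (y 0) (y 1) (y 2) (y 3)]
  have hW : ContDiff ℝ ∞ W := by
    refine contDiff_pi.2 fun i => ?_
    fin_cases i
    · exact contDiff_const
    · exact contDiff_apply ℝ ℝ 2
    · exact contDiff_apply ℝ ℝ 3
    · exact hf.comp (by fun_prop : ContDiff ℝ ∞ fun y : Fin 4 → ℝ => (y 0, y 1, y 2, y 3))
  obtain ⟨ε, hε, Y, hY₀, hYsmooth, hY⟩ :=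
    exists_contDiffOn_hasDerivAt_of_contDiff hW x₀ ![x₀, u₀, p₀, q₀]
  have hJ : IsOpen (Ioo (x₀ - ε) (x₀ + ε)) := isOpen_Ioo
  have hx₀ : x₀ ∈ Ioo (x₀ - ε) (x₀ + ε) := ⟨by linarith, by linarith⟩
  have hYi : ∀ i, ∀ t ∈ Ioo (x₀ - ε) (x₀ + ε), HasDerivAt (fun s => Y s i) (W (Y t) i) t :=
    fun i t ht => hasDerivAt_pi.1 (hY t ht) i
  have htime : EqOn (fun t => Y t 0) id (Ioo (x₀ - ε) (x₀ + ε)) :=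
    hJ.eqOn_of_deriv_eq isPreconnected_Ioo
      (fun t ht => (hYi 0 t ht).differentiableAt.differentiableWithinAt) differentiableOn_id
      (fun t ht => by simp [(hYi 0 t ht).deriv, W]) hx₀ (by simp [hY₀])
  have hd₁ : EqOn (deriv fun t => Y t 1) (fun t => Y t 2) (Ioo (x₀ - ε) (x₀ + ε)) :=
    fun t ht => (hYi 1 t ht).deriv
  have hd₂ : EqOn (deriv (deriv fun t => Y t 1)) (fun t => Y t 3) (Ioo (x₀ - ε) (x₀ + ε)) :=
    fun t ht => by
      rw [(hd₁.eventuallyEq_of_mem (hJ.mem_nhds ht)).deriv_eq]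
      exact (hYi 2 t ht).deriv
  have hd₃ : EqOn (deriv (deriv (deriv fun t => Y t 1)))
      (fun t => f t (Y t 1) (Y t 2) (Y t 3)) (Ioo (x₀ - ε) (x₀ + ε)) := fun t ht => by
    rw [(hd₂.eventuallyEq_of_mem (hJ.mem_nhds ht)).deriv_eq, (hYi 3 t ht).deriv]
    simp [W, show Y t 0 = t from htime ht]
  refine ⟨ε, hε, fun t => Y t 1, ⟨contDiffOn_pi.1 hYsmooth 1, fun t ht => ?_⟩,
    by simp [hY₀], by simp [hd₁ hx₀, hY₀], by simp [hd₂ hx₀, hY₀]⟩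
  rw [hd₃ ht, hd₁ ht, hd₂ ht]

theorem exists_solvesODE3_nondegenerate {f : Fn}
    (hf : ContDiff ℝ ∞ fun y : ℝ × ℝ × ℝ × ℝ => f y.1 y.2.1 y.2.2.1 y.2.2.2)
    {V : Set (ℝ × ℝ)} (hV : IsOpen V) {φ : ℝ → ℝ → ℝ} (hφ : ContDiffOn ℝ ∞ (uncurry φ) V)
    {x₀ u₀ p₀ q₀ : ℝ} (hz : (x₀, u₀) ∈ V) (hp₀ : p₀ ≠ 0) (hq₀ : q₀ ≠ 0)
    (ha : graphDeriv1 φ x₀ u₀ p₀ ≠ 0) :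
    ∃ δ > 0, ∃ u : ℝ → ℝ, SolvesODE3 f (Ioo (x₀ - δ) (x₀ + δ)) u ∧
      u x₀ = u₀ ∧ deriv u x₀ = p₀ ∧ deriv (deriv u) x₀ = q₀ ∧
      ∀ x ∈ Ioo (x₀ - δ) (x₀ + δ), deriv u x ≠ 0 ∧ deriv (deriv u) x ≠ 0 ∧
        (x, u x) ∈ V ∧ deriv (fun t => φ t (u t)) x ≠ 0 := by
  obtain ⟨ε, hε, u, ⟨hu, hode⟩, hu₀, hp, hq⟩ := exists_solvesODE3 hf x₀ u₀ p₀ q₀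
  have hJ : Ioo (x₀ - ε) (x₀ + ε) ∈ 𝓝 x₀ := Ioo_mem_nhds (by linarith) (by linarith)
  have hW : IsOpen (Ioo (x₀ - ε) (x₀ + ε) ∩ (fun t => (t, u t)) ⁻¹' V) :=
    (continuousOn_id.prodMk hu.continuousOn).isOpen_inter_preimage isOpen_Ioo hV
  have hx₀W : x₀ ∈ Ioo (x₀ - ε) (x₀ + ε) ∩ (fun t => (t, u t)) ⁻¹' V :=
    ⟨mem_of_mem_nhds hJ, by simpa [hu₀] using hz⟩
  have hX : ContDiffOn ℝ ∞ (fun t => φ t (u t))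
      (Ioo (x₀ - ε) (x₀ + ε) ∩ (fun t => (t, u t)) ⁻¹' V) :=
    hφ.comp ((contDiffOn_id.prodMk hu).mono inter_subset_left) fun t ht => ht.2
  have hX₀ : deriv (fun t => φ t (u t)) x₀ ≠ 0 := by
    have hdu := (hasDerivAt_derivs_of_contDiffOn isOpen_Ioo (hu.of_le ENat.LEInfty.out)
      (mem_of_mem_nhds hJ)).1
    rw [(hasDerivAt_comp_graph_s14 ((hφ.contDiffAt (hV.mem_nhds hx₀W.2)).differentiableAt
      (by simp)) hdu).deriv, hu₀, hp]
    exact ha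
  have hu₁ : ContDiffOn ℝ ∞ (deriv u) (Ioo (x₀ - ε) (x₀ + ε)) :=
    hu.deriv_of_isOpen isOpen_Ioo le_rfl
  have hev : ∀ᶠ x in 𝓝 x₀, x ∈ Ioo (x₀ - ε) (x₀ + ε) ∩ (fun t => (t, u t)) ⁻¹' V ∧
      deriv u x ≠ 0 ∧ deriv (deriv u) x ≠ 0 ∧ deriv (fun t => φ t (u t)) x ≠ 0 :=
    (hW.eventually_mem hx₀W).and <|
      (((hu.continuousOn_deriv_of_isOpen isOpen_Ioo ENat.LEInfty.out).continuousAt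
        hJ).eventually_ne (hp ▸ hp₀)).and <|
      (((hu₁.continuousOn_deriv_of_isOpen isOpen_Ioo ENat.LEInfty.out).continuousAt
        hJ).eventually_ne (hq ▸ hq₀)).and <|
      ((hX.continuousOn_deriv_of_isOpen hW ENat.LEInfty.out).continuousAt
        (hW.mem_nhds hx₀W)).eventually_ne hX₀
  obtain ⟨δ, hδ, hball⟩ := Metric.eventually_nhds_iff_ball.1 hev
  rw [Real.ball_eq_Ioo] at hball
  exact ⟨δ, hδ, u, ⟨hu.mono fun x hx => (hball x hx).1.1, fun x hx => hode x (hball x hx).1.1⟩,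
    hu₀, hp, hq, fun x hx => ⟨(hball x hx).2.1, (hball x hx).2.2.1, (hball x hx).1.2,
      (hball x hx).2.2.2⟩⟩

theorem exists_ne_zero_sub_mul_ne_zero_add_mul_ne_zero {x₀ u₀ α β : ℝ} (hz : (x₀, u₀) ≠ 0)
    (hαβ : (α, β) ≠ 0) :
    ∃ p : ℝ, p ≠ 0 ∧ u₀ - x₀ * p ≠ 0 ∧ α + p * β ≠ 0 := by
  have hfin : ∀ {a b : ℝ}, (a, b) ≠ 0 → {p : ℝ | a + p * b = 0}.Finite := by
    intro a b hab
    refine Set.Subsingleton.finite fun p (hp : a + p * b = 0) p' (hp' : a + p' * b = 0) => ?_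
    rcases eq_or_ne b 0 with hb | hb
    · exact absurd (Prod.ext (by simpa [hb] using hp) hb) hab
    · exact mul_right_cancel₀ hb (by linarith)
  have hz' : (u₀, -x₀) ≠ 0 := by
    contrapose! hz
    simp_all [Prod.ext_iff]
  obtain ⟨p, hp⟩ := ((hfin (a := 0) (b := 1) (by simp)).union (hfin hz')).union (hfin hαβ)
    |>.exists_notMem
  simp only [mem_union, mem_ofPred_eq, not_or] at hp
  exact ⟨p, by simpa using hp.1.1, fun h => hp.1.2 (by linear_combination h), hp.2⟩

/-- (Remark 4.2.)  There is no point transformation on any nonempty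
open set `V ⊆ ℝ²` and no smooth nowhere-vanishing `ā` with `((2ā·ā'' − 3(ā')²)/ā⁴)' ≠ 0`
under which `u''' = −x·(u')⁴(u'')³ + u·(u')³(u'')³` is equivalent to `ū''' = ā(x̄)³·ū`:
for every such `V`, point transformation and `ā` there is a smooth solution `u` of the
nonlinear equation with `u' ≠ 0`, `u'' ≠ 0`, graph in `V`, and `(φ(x,u(x)))' ≠ 0`, whose
transform fails to solve `ū''' = ā(x̄)³·ū`. -/
theorem example2_not_point_linearizable :
    ∀ (V : Set (ℝ × ℝ)), V.Nonempty →
      ∀ φ ψ : ℝ → ℝ → ℝ, IsPointTransformOn V φ ψ →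
        ∀ abar : ℝ → ℝ,
          ContDiff ℝ (⊤ : ℕ∞) abar → (∀ t, abar t ≠ 0) →
          (∀ t, deriv (fun r =>
            (2 * abar r * deriv (deriv abar) r - 3 * (deriv abar r)^2) / (abar r)^4) t ≠ 0) →
          ∃ (I : Set ℝ) (u : ℝ → ℝ),
            IsOpen I ∧ I.OrdConnected ∧ I.Nonempty ∧
            SolvesODE3 (fun x' u' p' q' => -x' * p'^4 * q'^3 + u' * p'^3 * q'^3) I u ∧
            (∀ x ∈ I, deriv u x ≠ 0) ∧
            (∀ x ∈ I, deriv (deriv u) x ≠ 0) ∧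
            (∀ x ∈ I, (x, u x) ∈ V) ∧
            (∀ x ∈ I, deriv (fun t => φ t (u t)) x ≠ 0) ∧
            ¬∃ v : ℝ → ℝ,
                ContDiffOn ℝ (⊤ : ℕ∞) v ((fun t => φ t (u t)) '' I) ∧
                (∀ x ∈ I, v (φ x (u x)) = ψ x (u x)) ∧
                (∀ y ∈ (fun t => φ t (u t)) '' I,
                  deriv (deriv (deriv v)) y = (abar y)^3 * v y) := by
  intro V hVne φ ψ hφψ abar _ _ _
  by_contra! hequiv
  have hφ : ContDiffOn ℝ ∞ (uncurry φ) V := contDiff_fst.comp_contDiffOn hφψ.smooth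
  have hψ : ContDiffOn ℝ ∞ (uncurry ψ) V := contDiff_snd.comp_contDiffOn hφψ.smooth
  obtain ⟨⟨x₀, u₀⟩, hz, hz₀⟩ :=
    (infinite_of_mem_nhds _ (hφψ.isOpen.mem_nhds hVne.some_mem)).nontrivial.exists_ne 0
  have hjac : pdx2 φ x₀ u₀ * pdu2 ψ x₀ u₀ - pdu2 φ x₀ u₀ * pdx2 ψ x₀ u₀ ≠ 0 :=
    hφψ.jac_ne x₀ u₀ hz
  obtain ⟨p₀, hp₀, hK, ha⟩ := exists_ne_zero_sub_mul_ne_zero_add_mul_ne_zero hz₀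
    (α := pdx2 φ x₀ u₀) (β := pdu2 φ x₀ u₀) fun h => hjac (by simp_all [Prod.ext_iff])
  refine mul_ne_zero (mul_ne_zero ha (mul_ne_zero hK (pow_ne_zero 3 hp₀))) hjac
    (leading_coeff_eq_zero_of_scaledTransformedThirdDeriv_eq
      (c := graphDeriv1 φ x₀ u₀ p₀ ^ 5 * (abar (φ x₀ u₀) ^ 3 * ψ x₀ u₀)) fun q hq => ?_)
  obtain ⟨δ, hδ, u, hsol, hu₀, hu₁, hu₂, hgood⟩ :=
    exists_solvesODE3_nondegenerate (f := fun x' u' p' q' => -x' * p'^4 * q'^3 + u' * p'^3 * q'^3)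
      (by fun_prop) hφψ.isOpen hφ hz hp₀ hq ha
  have hx₀ : x₀ ∈ Ioo (x₀ - δ) (x₀ + δ) := ⟨by linarith, by linarith⟩
  obtain ⟨v, hv, hvψ, hvode⟩ := hequiv _ u isOpen_Ioo ordConnected_Ioo ⟨x₀, hx₀⟩ hsol
    (fun x hx => (hgood x hx).1) (fun x hx => (hgood x hx).2.1) (fun x hx => (hgood x hx).2.2.1)
    fun x hx => (hgood x hx).2.2.2
  have h := graphDeriv1_pow_five_mul_deriv3_eq hφψ.isOpen hφ hψ isOpen_Ioo hsol.1
    (fun x hx => (hgood x hx).2.2.1) (fun x hx => (hgood x hx).2.2.2) hv hvψ hx₀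
  rw [hvode _ (mem_image_of_mem _ hx₀), hvψ x₀ hx₀, hsol.2 x₀ hx₀, hu₀, hu₁, hu₂] at h
  convert h.symm using 2
  ring

end
end
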